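/- Let m ≥ 2, n_k ≥ 2 for all k, let C ∈ ℝ^{n_1×⋯×n_m} be an entrywise nonnegative cost tensor, η > 0, and r_k ∈ Δ^{n_k} for k = 1,…,m. Let K = exp(−C/η) and let K̃ be entrywise strictly positive with ||log(K) − log(K̃)||_∞ ≤ ε_log for some 0 < ε_log ≤ 1. Let P̃ be a positive diagonal scaling of K̃ with ||P̃||_1 = 1 satisfying Σ_{k=1}^m ||r_k(P̃) − r_k||_1 ≤ ε_stop for some ε_stop > 0, and let P̂ ∈ B(r_1,…,r_m) satisfy ||P̂ − P̃||_1 ≤ 2 Σ_{k=1}^m ||r_k − r_k(P̃)||_1. Let P* be a minimizer of ⟨C, ·⟩ over B(r_1,…,r_m). Then ⟨C, P̂⟩ − ⟨C, P*⟩ ≤ 2 η ε_log + 2 η Σ_{k=1}^m log(n_k) + 4 ||C||_∞ ε_stop. -/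

import Mathlib

open Finset

namespace MOT

/-- The index set of a tensor with mode sizes `n 0, …, n (m-1)`. -/
abbrev Idx {m : ℕ} (n : Fin m → ℕ) := ∀ k : Fin m, Fin (n k)

/-- A real tensor of order `m` with mode sizes `n k`. -/
abbrev Tensor {m : ℕ} (n : Fin m → ℕ) := Idx n → ℝ

/-- The `k`-th marginal of a tensor: `(r_k(X))_j = ∑_{I : i_k = j} X_I`. -/
noncomputable def marginal {m : ℕ} {n : Fin m → ℕ} (X : Tensor n) (k : Fin m)
    (j : Fin (n k)) : ℝ :=
  ∑ I : Idx n, if I k = j then X I else 0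

/-- The entrywise ℓ¹-norm of a tensor. -/
noncomputable def tnorm1 {m : ℕ} {n : Fin m → ℕ} (X : Tensor n) : ℝ :=
  ∑ I : Idx n, |X I|

/-- The uniform norm (maximum absolute entry) of a real-valued family. -/
noncomputable def supAbs {ι : Type*} (X : ι → ℝ) : ℝ := ⨆ i, |X i|

/-- The ℓ¹-norm of a vector. -/
noncomputable def vnorm1 {N : ℕ} (v : Fin N → ℝ) : ℝ := ∑ j, |v j|

/-- The Euclidean norm of a vector. -/
noncomputable def vnorm2 {N : ℕ} (v : Fin N → ℝ) : ℝ := Real.sqrt (∑ j, v j ^ 2)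

/-- The Euclidean inner product of two vectors. -/
noncomputable def vinner {N : ℕ} (v w : Fin N → ℝ) : ℝ := ∑ j, v j * w j

/-- `v ∈ Δ^N`: entrywise strictly positive with entries summing to 1. -/
def IsSimplex {N : ℕ} (v : Fin N → ℝ) : Prop := (∀ j, 0 < v j) ∧ ∑ j, v j = 1

/-- `P ∈ B(r_1,…,r_m)`: entrywise nonnegative with prescribed marginals. -/
def Feasible {m : ℕ} {n : Fin m → ℕ} (r : ∀ k : Fin m, Fin (n k) → ℝ)
    (P : Tensor n) : Prop :=
  (∀ I, 0 ≤ P I) ∧ ∀ k j, marginal P k j = r k j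

/-- The entropy `H(P) = -∑_I P_I log P_I` (with `0 · log 0 = 0`). -/
noncomputable def entropy {m : ℕ} {n : Fin m → ℕ} (P : Tensor n) : ℝ :=
  -∑ I : Idx n, P I * Real.log (P I)

/-- The inner product `⟨X, Y⟩ = ∑_I X_I Y_I` of two tensors. -/
noncomputable def tinner {m : ℕ} {n : Fin m → ℕ} (X Y : Tensor n) : ℝ :=
  ∑ I : Idx n, X I * Y I

/-- The entropic transport cost `V_C^η(P) = ⟨C, P⟩ − η H(P)`. -/
noncomputable def entCost {m : ℕ} {n : Fin m → ℕ} (C : Tensor n) (η : ℝ)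
    (P : Tensor n) : ℝ :=
  tinner C P - η * entropy P

/-- `P` is a positive diagonal scaling of `K`. -/
def IsScaling {m : ℕ} {n : Fin m → ℕ} (K P : Tensor n) : Prop :=
  ∃ β : ∀ k : Fin m, Fin (n k) → ℝ, ∀ I, P I = K I * ∏ k, Real.exp (β k (I k))

end MOT

/-!
Rounding `P*` onto the marginals of `P̃` gives `Q` with `‖Q - P*‖₁ ≤ 2δ`, where
`δ = ∑ₖ ‖rₖ - rₖ(P̃)‖₁ ≤ ε_stop`; split the gap as
`⟨C, P̂ - P̃⟩ + ⟨C, P̃ - Q⟩ + ⟨C, Q - P*⟩`. The outer terms are at most `2 ‖C‖_∞ δ` each.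
For the middle one, `P̃` is a scaling of `K̃ = exp (-C̃ / η)` with `C̃ = -η log K̃`, so it minimizes
`⟨C̃, ·⟩ - η H` among nonnegative tensors with its own marginals (Gibbs' inequality). Since
`‖C - C̃‖_∞ ≤ η ε_log` and `0 ≤ H ≤ ∑ₖ log nₖ` on probability tensors, the middle term is at most
`2 η ε_log + η ∑ₖ log nₖ`.
-/

namespace MOT

open Real

lemma abs_le_supAbs {ι : Type*} [Finite ι] (X : ι → ℝ) (i : ι) : |X i| ≤ supAbs X :=
  le_ciSup (f := fun i => |X i|) (Set.finite_range _).bddAbove i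

lemma supAbs_nonneg {ι : Type*} (X : ι → ℝ) : 0 ≤ supAbs X :=
  Real.iSup_nonneg fun i => abs_nonneg (X i)

lemma vnorm1_sub_comm {N : ℕ} (v w : Fin N → ℝ) :
    vnorm1 (fun j => v j - w j) = vnorm1 (fun j => w j - v j) := by
  simp only [vnorm1, abs_sub_comm]

lemma mul_log_sub_mul_log_le {p q : ℝ} (hp : 0 < p) (hq : 0 ≤ q) :
    q * log p - q * log q ≤ p - q := by
  rcases hq.eq_or_lt with rfl | hq
  · simpa using hp.le
  · have h := mul_le_mul_of_nonneg_left (log_le_sub_one_of_pos (div_pos hp hq)) hq.le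
    rw [log_div hp.ne' hq.ne', mul_sub, mul_sub, mul_div_cancel₀ _ hq.ne'] at h
    linarith

lemma sum_mul_log_sub_le {ι : Type*} [Fintype ι] {p q : ι → ℝ} (hp : ∀ i, 0 < p i)
    (hq : ∀ i, 0 ≤ q i) :
    ∑ i, q i * log (p i) - ∑ i, q i * log (q i) ≤ ∑ i, p i - ∑ i, q i := by
  rw [← Finset.sum_sub_distrib, ← Finset.sum_sub_distrib]
  exact Finset.sum_le_sum fun i _ => mul_log_sub_mul_log_le (hp i) (hq i)

lemma one_sub_prod_le_sum_one_sub {ι : Type*} (s : Finset ι) {c : ι → ℝ}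
    (h0 : ∀ i ∈ s, 0 ≤ c i) (h1 : ∀ i ∈ s, c i ≤ 1) :
    1 - ∏ i ∈ s, c i ≤ ∑ i ∈ s, (1 - c i) := by
  classical
  induction s using Finset.induction with
  | empty => simp
  | insert a s ha ih =>
    rw [Finset.prod_insert ha, Finset.sum_insert ha]
    have h0' : ∀ i ∈ s, 0 ≤ c i := fun i hi => h0 i (mem_insert_of_mem hi)
    have h1' : ∀ i ∈ s, c i ≤ 1 := fun i hi => h1 i (mem_insert_of_mem hi)
    nlinarith [ih h0' h1', Finset.prod_nonneg h0', Finset.prod_le_one h0' h1',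
      h0 a (mem_insert_self a s), h1 a (mem_insert_self a s)]

section Tensors

variable {m : ℕ} {n : Fin m → ℕ}

section Marginals

lemma sum_marginal (X : Tensor n) (k : Fin m) : ∑ j, marginal X k j = ∑ I, X I := by
  unfold marginal
  rw [Finset.sum_comm]
  simp

lemma marginal_nonneg {X : Tensor n} (hX : ∀ I, 0 ≤ X I) (k : Fin m) (j : Fin (n k)) :
    0 ≤ marginal X k j :=
  Finset.sum_nonneg fun I _ => by split_ifs <;> simp [hX I]

lemma marginal_mono {X Y : Tensor n} (h : ∀ I, X I ≤ Y I) (k : Fin m) (j : Fin (n k)) :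
    marginal X k j ≤ marginal Y k j :=
  Finset.sum_le_sum fun I _ => by split_ifs <;> simp [h I]

lemma marginal_add (X Y : Tensor n) (k : Fin m) (j : Fin (n k)) :
    marginal (fun I => X I + Y I) k j = marginal X k j + marginal Y k j := by
  unfold marginal
  rw [← Finset.sum_add_distrib]
  exact Finset.sum_congr rfl fun I _ => by split_ifs <;> simp

lemma marginal_const_mul (a : ℝ) (X : Tensor n) (k : Fin m) (j : Fin (n k)) :
    marginal (fun I => a * X I) k j = a * marginal X k j := by
  unfold marginal
  rw [Finset.mul_sum]
  exact Finset.sum_congr rfl fun I _ => by split_ifs <;> simp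

lemma marginal_mul_apply (X : Tensor n) (k : Fin m) (g : Fin (n k) → ℝ) (j : Fin (n k)) :
    marginal (fun I => X I * g (I k)) k j = g j * marginal X k j := by
  unfold marginal
  rw [Finset.mul_sum]
  exact Finset.sum_congr rfl fun I _ => by split_ifs with h <;> simp [h, mul_comm]

lemma sum_mul_apply (X : Tensor n) (k : Fin m) (g : Fin (n k) → ℝ) :
    ∑ I, X I * g (I k) = ∑ j, g j * marginal X k j := by
  simp_rw [← marginal_mul_apply, sum_marginal]

lemma sum_mul_sum_apply (X : Tensor n) (β : ∀ k, Fin (n k) → ℝ) :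
    ∑ I, X I * ∑ k, β k (I k) = ∑ k, ∑ j, β k j * marginal X k j := by
  simp_rw [Finset.mul_sum]
  rw [Finset.sum_comm]
  exact Finset.sum_congr rfl fun k _ => sum_mul_apply X k (β k)

lemma sum_prod_apply (v : ∀ k, Fin (n k) → ℝ) :
    ∑ I : Idx n, ∏ k, v k (I k) = ∏ k, ∑ j, v k j :=
  (Fintype.prod_sum v).symm

lemma marginal_prod_apply (v : ∀ k, Fin (n k) → ℝ) (k : Fin m) (j : Fin (n k)) :
    marginal (fun I => ∏ l, v l (I l)) k j = v k j * ∏ l ∈ univ.erase k, ∑ i, v l i := by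
  classical
  set w := Function.update v k (Pi.single j (v k j))
  have hw : ∀ I : Idx n, (if I k = j then ∏ l, v l (I l) else 0) = ∏ l, w l (I l) := by
    intro I
    have hrest : ∏ l ∈ univ.erase k, w l (I l) = ∏ l ∈ univ.erase k, v l (I l) :=
      Finset.prod_congr rfl fun l hl => by simp [w, Function.update_of_ne (ne_of_mem_erase hl)]
    rw [← Finset.mul_prod_erase _ _ (mem_univ k), ← Finset.mul_prod_erase _ _ (mem_univ k), hrest]
    by_cases h : I k = j <;> simp [w, h]
  unfold marginal
  simp_rw [hw, sum_prod_apply, ← Finset.mul_prod_erase _ _ (mem_univ k)]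
  congr 1
  · simp [w]
  · exact Finset.prod_congr rfl fun l hl => by simp [w, Function.update_of_ne (ne_of_mem_erase hl)]

lemma Feasible.sum_eq {s : ∀ k, Fin (n k) → ℝ} {P : Tensor n} (hP : Feasible s P) (k : Fin m) :
    ∑ I, P I = ∑ j, s k j := by
  rw [← sum_marginal P k]
  exact Finset.sum_congr rfl fun j _ => hP.2 k j

end Marginals

section Norms

lemma tnorm1_eq_sum {X : Tensor n} (hX : ∀ I, 0 ≤ X I) : tnorm1 X = ∑ I, X I :=
  Finset.sum_congr rfl fun I _ => abs_of_nonneg (hX I)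

lemma tnorm1_sub_le (X Y : Tensor n) : tnorm1 (fun I => X I - Y I) ≤ tnorm1 X + tnorm1 Y := by
  rw [tnorm1, tnorm1, tnorm1, ← Finset.sum_add_distrib]
  exact Finset.sum_le_sum fun I _ => abs_sub _ _

lemma tinner_sub_tinner_le_of_abs_le {C : Tensor n} {a : ℝ} (hC : ∀ I, |C I| ≤ a)
    (X Y : Tensor n) : tinner C X - tinner C Y ≤ a * tnorm1 (fun I => X I - Y I) := by
  rw [tinner, tinner, tnorm1, ← Finset.sum_sub_distrib, Finset.mul_sum]
  refine Finset.sum_le_sum fun I _ => ?_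
  calc C I * X I - C I * Y I ≤ |C I| * |X I - Y I| := by
        rw [← mul_sub, ← abs_mul]
        exact le_abs_self _
    _ ≤ a * |X I - Y I| := by gcongr; exact hC I

lemma tinner_sub_tinner_le (C X Y : Tensor n) :
    tinner C X - tinner C Y ≤ supAbs C * tnorm1 (fun I => X I - Y I) :=
  tinner_sub_tinner_le_of_abs_le (abs_le_supAbs C) X Y

end Norms

section Entropy

lemma entropy_nonneg {P : Tensor n} (hP : ∀ I, 0 ≤ P I) (hP1 : ∑ I, P I = 1) :
    0 ≤ entropy P := by
  rw [entropy, neg_nonneg]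
  refine Finset.sum_nonpos fun I _ => mul_log_nonpos (hP I) ?_
  rw [← hP1]
  exact Finset.single_le_sum (fun J _ => hP J) (mem_univ I)

lemma entropy_le_log_card {P : Tensor n} (hP : ∀ I, 0 ≤ P I) (hP1 : ∑ I, P I = 1) :
    entropy P ≤ log (Fintype.card (Idx n)) := by
  have hN : (0 : ℝ) < Fintype.card (Idx n) := by
    obtain ⟨I, -, -⟩ := Finset.exists_ne_zero_of_sum_ne_zero (hP1.trans_ne one_ne_zero)
    exact_mod_cast Fintype.card_pos_iff.mpr ⟨I⟩
  have hGibbs := sum_mul_log_sub_le (p := fun _ => (Fintype.card (Idx n) : ℝ)⁻¹)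
    (fun _ => inv_pos.mpr hN) hP
  simp only [Finset.sum_const, card_univ, nsmul_eq_mul, mul_inv_cancel₀ hN.ne', hP1,
    log_inv, ← Finset.sum_mul] at hGibbs
  rw [entropy]
  linarith

lemma entropy_le_sum_log {P : Tensor n} (hP : ∀ I, 0 ≤ P I) (hP1 : ∑ I, P I = 1) :
    entropy P ≤ ∑ k, log (n k : ℝ) := by
  obtain ⟨I, -, -⟩ := Finset.exists_ne_zero_of_sum_ne_zero (hP1.trans_ne one_ne_zero)
  convert entropy_le_log_card hP hP1
  simp only [Fintype.card_pi, Fintype.card_fin, Nat.cast_prod]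
  exact (log_prod fun k _ => Nat.cast_ne_zero.mpr (I k).pos.ne').symm

end Entropy

section Scaling

lemma IsScaling.pos {K P : Tensor n} (hP : IsScaling K P) (hK : ∀ I, 0 < K I) (I : Idx n) :
    0 < P I := by
  obtain ⟨β, hβ⟩ := hP
  rw [hβ I]
  exact mul_pos (hK I) (Finset.prod_pos fun k _ => exp_pos _)

lemma IsScaling.exists_eq_exp {C P : Tensor n} {η : ℝ}
    (hP : IsScaling (fun I => exp (-C I / η)) P) :
    ∃ β : ∀ k, Fin (n k) → ℝ, ∀ I, P I = exp (-C I / η + ∑ k, β k (I k)) := by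
  obtain ⟨β, hβ⟩ := hP
  exact ⟨β, fun I => by rw [hβ I, exp_add, exp_sum]⟩

theorem IsScaling.entCost_le {C P Q : Tensor n} {η : ℝ} (hη : 0 < η)
    (hP : IsScaling (fun I => exp (-C I / η)) P) (hQ : Feasible (marginal P) Q)
    (hmass : ∑ I, Q I = ∑ I, P I) :
    entCost C η P ≤ entCost C η Q := by
  obtain ⟨β, hβ⟩ := hP.exists_eq_exp
  have hC : ∀ I, C I = η * (∑ k, β k (I k) - log (P I)) := fun I => by
    rw [hβ I, log_exp]
    field_simp
    ring
  have hcost : ∀ X : Tensor n, entCost C η X = η * ∑ I, X I * ∑ k, β k (I k)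
      + η * (∑ I, X I * log (X I) - ∑ I, X I * log (P I)) := fun X => by
    have hinner : tinner C X = η * ∑ I, X I * ∑ k, β k (I k) - η * ∑ I, X I * log (P I) := by
      rw [tinner, Finset.mul_sum, Finset.mul_sum, ← Finset.sum_sub_distrib]
      exact Finset.sum_congr rfl fun I _ => by rw [hC]; ring
    rw [entCost, hinner, entropy]
    ring
  have hβQ : ∑ I, Q I * ∑ k, β k (I k) = ∑ I, P I * ∑ k, β k (I k) := by
    simp only [sum_mul_sum_apply, hQ.2]
  have hGibbs := sum_mul_log_sub_le (fun I => hβ I ▸ exp_pos _) hQ.1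
  rw [hcost, hcost, hβQ, sub_self, mul_zero, add_le_add_iff_left]
  exact mul_nonneg hη.le (by linarith)

theorem IsScaling.tinner_sub_tinner_le_of_abs_log_le {C K P Q : Tensor n} {η ε : ℝ} (hη : 0 < η)
    (hK : ∀ I, 0 < K I) (hCK : ∀ I, |-C I / η - log (K I)| ≤ ε) (hP : IsScaling K P)
    (hP1 : ∑ I, P I = 1) (hQ : Feasible (marginal P) Q) (hQ1 : ∑ I, Q I = 1) :
    tinner C P - tinner C Q ≤ 2 * η * ε + η * ∑ k, log (n k : ℝ) := by
  set C' : Tensor n := fun I => -η * log (K I)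
  have hP' : IsScaling (fun I => exp (-C' I / η)) P := by
    convert hP using 2 with I
    simp [C', hη.ne', exp_log (hK I)]
  have hP0 : ∀ I, 0 ≤ P I := fun I => (hP.pos hK I).le
  have hclose : ∀ I, |C I - C' I| ≤ η * ε := fun I => by
    have : C I - C' I = -η * (-C I / η - log (K I)) := by
      simp only [C']
      field_simp
      ring
    rw [this, abs_mul, abs_neg, abs_of_pos hη]
    exact mul_le_mul_of_nonneg_left (hCK I) hη.le
  have hnorm : tnorm1 (fun I => P I - Q I) ≤ 2 := by
    have := tnorm1_sub_le P Q
    rw [tnorm1_eq_sum hP0, tnorm1_eq_sum hQ.1, hP1, hQ1] at this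
    linarith
  have hsplit : tinner C P - tinner C Q = (tinner (fun I => C I - C' I) P
      - tinner (fun I => C I - C' I) Q) + (entCost C' η P - entCost C' η Q)
      + η * (entropy P - entropy Q) := by
    simp only [entCost, tinner, sub_mul, Finset.sum_sub_distrib]
    ring
  have hperturb := tinner_sub_tinner_le_of_abs_le hclose P Q
  have hopt := hP'.entCost_le hη hQ (hQ1.trans hP1.symm)
  have hHP := entropy_le_sum_log hP0 hP1
  have hHQ := entropy_nonneg hQ.1 hQ1
  obtain ⟨I, -, -⟩ := Finset.exists_ne_zero_of_sum_ne_zero (hP1.trans_ne one_ne_zero)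
  have hε : 0 ≤ η * ε := mul_nonneg hη.le ((abs_nonneg _).trans (hCK I))
  rw [hsplit]
  nlinarith [mul_le_mul_of_nonneg_left hnorm hε, mul_le_mul_of_nonneg_left hHP hη.le,
    mul_nonneg hη.le hHQ]

end Scaling

section Rounding

-- On an empty slice (`marginal F k j = 0`) the factor is `0` by `x / 0 = 0`; it scales no mass.
noncomputable def roundFactor (F : Tensor n) (s : ∀ k, Fin (n k) → ℝ) (k : Fin m)
    (j : Fin (n k)) : ℝ :=
  min 1 (s k j / marginal F k j)

noncomputable def roundDown (F : Tensor n) (s : ∀ k, Fin (n k) → ℝ) : Tensor n :=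
  fun I => F I * ∏ k, roundFactor F s k (I k)

variable {F : Tensor n} {s : ∀ k, Fin (n k) → ℝ}

lemma roundFactor_nonneg (hF : ∀ I, 0 ≤ F I) (hs : ∀ k j, 0 ≤ s k j) (k : Fin m)
    (j : Fin (n k)) : 0 ≤ roundFactor F s k j :=
  le_min zero_le_one (div_nonneg (hs k j) (marginal_nonneg hF k j))

lemma roundFactor_le_one (k : Fin m) (j : Fin (n k)) : roundFactor F s k j ≤ 1 :=
  min_le_left _ _

lemma roundFactor_mul_marginal (hF : ∀ I, 0 ≤ F I) (hs : ∀ k j, 0 ≤ s k j) (k : Fin m)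
    (j : Fin (n k)) : roundFactor F s k j * marginal F k j = min (marginal F k j) (s k j) := by
  rcases (marginal_nonneg hF k j).eq_or_lt with h | h
  · rw [← h, mul_zero, min_eq_left (hs k j)]
  · rw [roundFactor, min_mul_of_nonneg _ _ h.le, one_mul, div_mul_cancel₀ _ h.ne']

lemma roundDown_nonneg (hF : ∀ I, 0 ≤ F I) (hs : ∀ k j, 0 ≤ s k j) (I : Idx n) :
    0 ≤ roundDown F s I :=
  mul_nonneg (hF I) (Finset.prod_nonneg fun k _ => roundFactor_nonneg hF hs k _)

lemma roundDown_le (hF : ∀ I, 0 ≤ F I) (hs : ∀ k j, 0 ≤ s k j) (I : Idx n) :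
    roundDown F s I ≤ F I :=
  mul_le_of_le_one_right (hF I) (Finset.prod_le_one
    (fun k _ => roundFactor_nonneg hF hs k _) fun k _ => roundFactor_le_one k _)

lemma roundDown_le_mul (hF : ∀ I, 0 ≤ F I) (hs : ∀ k j, 0 ≤ s k j) (k : Fin m) (I : Idx n) :
    roundDown F s I ≤ F I * roundFactor F s k (I k) := by
  rw [roundDown, ← Finset.mul_prod_erase _ _ (mem_univ k)]
  refine mul_le_mul_of_nonneg_left ?_ (hF I)
  exact mul_le_of_le_one_right (roundFactor_nonneg hF hs k _) (Finset.prod_le_one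
    (fun l _ => roundFactor_nonneg hF hs l _) fun l _ => roundFactor_le_one l _)

lemma marginal_roundDown_le (hF : ∀ I, 0 ≤ F I) (hs : ∀ k j, 0 ≤ s k j) (k : Fin m)
    (j : Fin (n k)) : marginal (roundDown F s) k j ≤ s k j :=
  calc marginal (roundDown F s) k j
      ≤ marginal (fun I => F I * roundFactor F s k (I k)) k j :=
        marginal_mono (roundDown_le_mul hF hs k) k j
    _ = min (marginal F k j) (s k j) := by
        rw [marginal_mul_apply, roundFactor_mul_marginal hF hs]
    _ ≤ s k j := min_le_right _ _

lemma sum_sub_roundDown_le (hF : ∀ I, 0 ≤ F I) (hs : ∀ k j, 0 ≤ s k j) :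
    ∑ I, (F I - roundDown F s I) ≤ ∑ k, vnorm1 (fun j => marginal F k j - s k j) :=
  calc ∑ I, (F I - roundDown F s I)
      = ∑ I, F I * (1 - ∏ k, roundFactor F s k (I k)) :=
        Finset.sum_congr rfl fun I _ => by rw [roundDown]; ring
    _ ≤ ∑ I, F I * ∑ k, (1 - roundFactor F s k (I k)) :=
        Finset.sum_le_sum fun I _ => mul_le_mul_of_nonneg_left
          (one_sub_prod_le_sum_one_sub _ (fun k _ => roundFactor_nonneg hF hs k _)
            fun k _ => roundFactor_le_one k _) (hF I)
    _ = ∑ k, ∑ j, (marginal F k j - min (marginal F k j) (s k j)) := by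
        rw [sum_mul_sum_apply F fun k j => 1 - roundFactor F s k j]
        simp only [sub_mul, one_mul, roundFactor_mul_marginal hF hs]
    _ ≤ ∑ k, vnorm1 (fun j => marginal F k j - s k j) :=
        Finset.sum_le_sum fun k _ => Finset.sum_le_sum fun j _ => by
          rcases le_total (marginal F k j) (s k j) with h | h
          · simp [min_eq_left h]
          · rw [min_eq_right h]
            exact le_abs_self _

end Rounding

lemma exists_feasible_sum_eq {d : ∀ k, Fin (n k) → ℝ} (hd : ∀ k j, 0 ≤ d k j) {e : ℝ}
    (he : 0 ≤ e) (hsum : ∀ k, ∑ j, d k j = e) :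
    ∃ R : Tensor n, Feasible d R ∧ ∑ I, R I = e := by
  rcases he.eq_or_lt with rfl | he
  · refine ⟨0, ⟨fun _ => le_rfl, fun k j => ?_⟩, by simp⟩
    have := (Finset.sum_eq_zero_iff_of_nonneg fun j _ => hd k j).mp (hsum k) j (mem_univ j)
    simp [this, marginal]
  · have hnorm : ∀ k, ∑ j, d k j / e = 1 := fun k => by
      rw [← Finset.sum_div, hsum, div_self he.ne']
    refine ⟨fun I => e * ∏ k, d k (I k) / e, ⟨fun I => ?_, fun k j => ?_⟩, ?_⟩
    · exact mul_nonneg he.le (Finset.prod_nonneg fun k _ => div_nonneg (hd k _) he.le)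
    · rw [marginal_const_mul, marginal_prod_apply (fun k j => d k j / e)]
      simp only [hnorm, Finset.prod_const_one, mul_one]
      field_simp
    · rw [← Finset.mul_sum, sum_prod_apply (fun k j => d k j / e)]
      simp [hnorm]

/-- Rounding onto `Feasible s`: scale `F` down until no marginal exceeds `s`, then add back the
missing mass as a product tensor. -/
theorem exists_feasible_tnorm1_sub_le {F : Tensor n} (hF : ∀ I, 0 ≤ F I)
    {s : ∀ k, Fin (n k) → ℝ} (hs : ∀ k j, 0 ≤ s k j) (hsum : ∀ k, ∑ j, s k j = ∑ I, F I) :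
    ∃ Q : Tensor n, Feasible s Q ∧
      tnorm1 (fun I => Q I - F I) ≤ 2 * ∑ k, vnorm1 (fun j => marginal F k j - s k j) := by
  set G := roundDown F s
  set e := ∑ I, (F I - G I)
  have he : 0 ≤ e := Finset.sum_nonneg fun I _ => sub_nonneg.mpr (roundDown_le hF hs I)
  obtain ⟨R, hR, hRsum⟩ := exists_feasible_sum_eq (d := fun k j => s k j - marginal G k j)
    (fun k j => sub_nonneg.mpr (marginal_roundDown_le hF hs k j)) he fun k => by
      rw [Finset.sum_sub_distrib, hsum, sum_marginal, ← Finset.sum_sub_distrib]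
  refine ⟨fun I => G I + R I, ⟨fun I => add_nonneg (roundDown_nonneg hF hs I) (hR.1 I),
    fun k j => by rw [marginal_add, hR.2]; ring⟩, ?_⟩
  calc tnorm1 (fun I => G I + R I - F I) ≤ ∑ I, ((F I - G I) + R I) :=
        Finset.sum_le_sum fun I _ => abs_le.mpr
          ⟨by linarith [hR.1 I], by linarith [roundDown_le hF hs I]⟩
    _ = 2 * e := by rw [Finset.sum_add_distrib, hRsum]; ring
    _ ≤ 2 * ∑ k, vnorm1 (fun j => marginal F k j - s k j) := by
        gcongr
        exact sum_sub_roundDown_le hF hs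

end Tensors

theorem eps_accurate_solution_general
    {m : ℕ} (hm : 2 ≤ m) {n : Fin m → ℕ}
    (C : Tensor n)
    (η : ℝ) (hη : 0 < η)
    (r : ∀ k : Fin m, Fin (n k) → ℝ) (hr : ∀ k, IsSimplex (r k))
    (Kt : Tensor n) (hKt : ∀ I, 0 < Kt I)
    (εlog : ℝ)
    (hlog : supAbs (fun I : Idx n =>
      Real.log (Real.exp (-C I / η)) - Real.log (Kt I)) ≤ εlog)
    (Pt : Tensor n) (hscal : IsScaling Kt Pt) (hPt1 : tnorm1 Pt = 1)
    (εstop : ℝ)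
    (hstop : ∑ k, vnorm1 (fun j => marginal Pt k j - r k j) ≤ εstop)
    (Phat : Tensor n)
    (hPhatRound : tnorm1 (fun I => Phat I - Pt I) ≤
      2 * ∑ k, vnorm1 (fun j => r k j - marginal Pt k j))
    (Pstar : Tensor n) (hPstarF : Feasible r Pstar) :
    tinner C Phat - tinner C Pstar ≤
      2 * η * εlog + 2 * η * ∑ k, Real.log (n k : ℝ) + 4 * supAbs C * εstop := by
  have k₀ : Fin m := ⟨0, by omega⟩
  have hPt0 : ∀ I, 0 ≤ Pt I := fun I => (hscal.pos hKt I).le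
  have hPtsum : ∑ I, Pt I = 1 := (tnorm1_eq_sum hPt0).symm.trans hPt1
  obtain ⟨Q, hQ, hQdist⟩ := exists_feasible_tnorm1_sub_le hPstarF.1 (marginal_nonneg hPt0)
    fun k => by rw [sum_marginal, hPtsum, hPstarF.sum_eq k₀, (hr k₀).2]
  have hQsum : ∑ I, Q I = 1 := by rw [hQ.sum_eq k₀, sum_marginal, hPtsum]
  have hδ : ∑ k, vnorm1 (fun j => r k j - marginal Pt k j) ≤ εstop := by
    simpa only [vnorm1_sub_comm] using hstop
  have hround : tnorm1 (fun I => Q I - Pstar I) ≤ 2 * εstop := by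
    simp only [hPstarF.2] at hQdist
    linarith
  have hphat : tnorm1 (fun I => Phat I - Pt I) ≤ 2 * εstop := by linarith
  have hmiddle := hscal.tinner_sub_tinner_le_of_abs_log_le hη hKt (fun I => by
    simpa only [log_exp] using (abs_le_supAbs _ I).trans hlog) hPtsum hQ hQsum
  have hC := supAbs_nonneg C
  have hlogn : 0 ≤ η * ∑ k, log (n k : ℝ) :=
    mul_nonneg hη.le (Finset.sum_nonneg fun k _ => log_natCast_nonneg _)
  nlinarith [tinner_sub_tinner_le C Phat Pt, tinner_sub_tinner_le C Q Pstar,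
    mul_le_mul_of_nonneg_left hphat hC, mul_le_mul_of_nonneg_left hround hC]

/-- Theorem `thm:EpsAccurateApprox`: the rounded output `P̂` of the
approximate multi-marginal Sinkhorn algorithm is an `ε`-approximate solution of the
unregularized problem with `ε = 2 η ε_log + 2 η ∑_k log n_k + 4 ‖C‖_∞ ε_stop`. -/
theorem eps_accurate_solution
    {m : ℕ} (hm : 2 ≤ m) {n : Fin m → ℕ} (hn : ∀ k, 2 ≤ n k)
    (C : Tensor n) (hC : ∀ I, 0 ≤ C I)
    (η : ℝ) (hη : 0 < η)
    (r : ∀ k : Fin m, Fin (n k) → ℝ) (hr : ∀ k, IsSimplex (r k))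
    (Kt : Tensor n) (hKt : ∀ I, 0 < Kt I)
    (εlog : ℝ) (hεlog0 : 0 < εlog) (hεlog1 : εlog ≤ 1)
    (hlog : supAbs (fun I : Idx n =>
      Real.log (Real.exp (-C I / η)) - Real.log (Kt I)) ≤ εlog)
    (Pt : Tensor n) (hscal : IsScaling Kt Pt) (hPt1 : tnorm1 Pt = 1)
    (εstop : ℝ) (hεs : 0 < εstop)
    (hstop : ∑ k, vnorm1 (fun j => marginal Pt k j - r k j) ≤ εstop)
    (Phat : Tensor n) (hPhatF : Feasible r Phat)
    (hPhatRound : tnorm1 (fun I => Phat I - Pt I) ≤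
      2 * ∑ k, vnorm1 (fun j => r k j - marginal Pt k j))
    (Pstar : Tensor n) (hPstarF : Feasible r Pstar)
    (hPstarMin : ∀ Q : Tensor n, Feasible r Q → tinner C Pstar ≤ tinner C Q) :
    tinner C Phat - tinner C Pstar ≤
      2 * η * εlog + 2 * η * ∑ k, Real.log (n k : ℝ) + 4 * supAbs C * εstop :=
  eps_accurate_solution_general hm C η hη r hr Kt hKt εlog hlog Pt hscal hPt1 εstop hstop Phat
    hPhatRound Pstar hPstarF

end MOT
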